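/- arXiv:1707.01189 — 4 statements merged into one kernel-verified Lean document; each statement's English description precedes it below -/
import Mathlib

section
/- For a zero-mean Laplace distribution with density f(x) = (1/(2b)) exp(-|x|/b) and scale b = Δf/ε, for any two real values v₁, v₂ with |v₁ - v₂| ≤ Δf and any x ∈ ℝ, the ratio f(x - v₁)/f(x - v₂) is at most exp(ε). -/
open Real

/- The density ratio of a centred Laplace law at two points is `exp ((|y| - |x|) / b)`, and the
reverse triangle inequality bounds `|y| - |x|` by `|x - y|`. Shifting both points by the query
answers `v₁, v₂` makes `|x - y| = |v₁ - v₂| ≤ Δf`, and `Δf / b = ε` by the choice of scale. -/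

noncomputable def laplacePDF (b x : ℝ) : ℝ :=
  1 / (2 * b) * exp (-|x| / b)

theorem laplacePDF_div_laplacePDF {b : ℝ} (hb : b ≠ 0) (x y : ℝ) :
    laplacePDF b x / laplacePDF b y = exp ((|y| - |x|) / b) := by
  rw [laplacePDF, laplacePDF, mul_div_mul_left _ _ (by positivity), ← exp_sub]
  ring_nf

theorem laplacePDF_div_le_exp {b : ℝ} (hb : 0 < b) (x y : ℝ) :
    laplacePDF b x / laplacePDF b y ≤ exp (|x - y| / b) := by
  rw [laplacePDF_div_laplacePDF hb.ne']
  gcongr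
  simpa only [abs_sub_comm y x] using abs_sub_abs_le_abs_sub y x

theorem laplace_density_ratio_bound_general
    (b ε Δf : ℝ) (hb : b > 0) (hΔf : Δf > 0)
    (hbe : b = Δf / ε)
    (v₁ v₂ : ℝ) (hv : |v₁ - v₂| ≤ Δf) (x : ℝ) :
    (1 / (2 * b)) * exp (-|x - v₁| / b) / ((1 / (2 * b)) * exp (-|x - v₂| / b))
      ≤ exp ε := by
  have hshift : |(x - v₁) - (x - v₂)| = |v₁ - v₂| := by
    rw [sub_sub_sub_cancel_left, abs_sub_comm]
  have hscale : Δf / b = ε := by rw [hbe, div_div_cancel₀ hΔf.ne']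
  calc laplacePDF b (x - v₁) / laplacePDF b (x - v₂)
      ≤ exp (|v₁ - v₂| / b) := hshift ▸ laplacePDF_div_le_exp hb _ _
    _ ≤ exp (Δf / b) := by gcongr
    _ = exp ε := by rw [hscale]

theorem laplace_density_ratio_bound
    (b ε Δf : ℝ) (hb : b > 0) (hε : ε > 0) (hΔf : Δf > 0)
    (hbe : b = Δf / ε)
    (v₁ v₂ : ℝ) (hv : |v₁ - v₂| ≤ Δf) (x : ℝ) :
    (1 / (2 * b)) * exp (-|x - v₁| / b) / ((1 / (2 * b)) * exp (-|x - v₂| / b))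
      ≤ exp ε :=
  laplace_density_ratio_bound_general b ε Δf hb hΔf hbe v₁ v₂ hv x
end

section
/- For the symmetric geometric distribution with parameter α > 1, given by P(k) = ((α-1)/(α+1)) α^{-|k|} for k ∈ ℤ, and α = exp(ε/Δf), for any integers v₁, v₂ with |v₁ - v₂| ≤ Δf and any k ∈ ℤ, the ratio P(k - v₁)/P(k - v₂) is at most exp(ε). -/
/-! The normalising constant cancels, leaving α ^ (|k - v₂| - |k - v₁|). By the reverse triangle
inequality the exponent is at most |v₁ - v₂| ≤ Δf, and α ^ Δf = exp ε. -/

open Real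

lemma zpow_neg_abs_sub_div_zpow_neg_abs_sub_le {α : ℝ} (hα : 1 ≤ α) (k v₁ v₂ : ℤ) :
    α ^ (-|k - v₁|) / α ^ (-|k - v₂|) ≤ α ^ |v₁ - v₂| := by
  rw [← zpow_sub₀ (by positivity)]
  apply zpow_le_zpow_right₀ hα
  have := abs_sub_abs_le_abs_sub (k - v₂) (k - v₁)
  rw [sub_sub_sub_cancel_left] at this
  linarith

lemma exp_div_intCast_zpow (x : ℝ) {n : ℤ} (hn : n ≠ 0) : exp (x / n) ^ n = exp x := by
  rw [← rpow_intCast, ← exp_mul, div_mul_cancel₀ x (Int.cast_ne_zero.mpr hn)]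

theorem geometric_mechanism_dp
    (ε : ℝ) (hε : ε > 0) (Δf : ℤ) (hΔf : Δf > 0)
    (α : ℝ) (hα : α = exp (ε / (Δf : ℝ)))
    (v₁ v₂ : ℤ) (hv : |v₁ - v₂| ≤ Δf) (k : ℤ) :
    ((α - 1) / (α + 1)) * α ^ (-|k - v₁|) /
      (((α - 1) / (α + 1)) * α ^ (-|k - v₂|)) ≤ exp ε := by
  have hα_gt_one : 1 < α := hα ▸ one_lt_exp_iff.mpr (by positivity)
  have hc : (α - 1) / (α + 1) ≠ 0 := by
    apply div_ne_zero <;> linarith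
  rw [mul_div_mul_left _ _ hc]
  calc _ ≤ α ^ |v₁ - v₂| := zpow_neg_abs_sub_div_zpow_neg_abs_sub_le hα_gt_one.le k v₁ v₂
    _ ≤ α ^ Δf := zpow_le_zpow_right₀ hα_gt_one.le hv
    _ = exp ε := hα ▸ exp_div_intCast_zpow ε hΔf.ne'
end

section
/- For the piecewise Laplace mixture density Lm with inner scale b₂ on |x| ≤ c_t and outer scale b₁ on |x| > c_t and constants a₁, a₂ > 0, the second moment satisfies ∫_ℝ x² Lm(x) dx = 2a₂(b₂² - exp(-c_t/b₂)(b₂² + b₂ c_t + c_t²/2)) + 2a₁ exp(-c_t/b₁)(b₁² + b₁ c_t + c_t²/2). -/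
/-!
The integrand is a function of `|x|`, so the moment is twice the integral over `(0, ∞)`, which
splits at `ct` into a truncated and a tail integral of `x² e^{-x/b}`. Both follow from the
antiderivative `-b e^{-x/b} (x² + 2bx + 2b²)`, which vanishes at `+∞` for `b > 0`.
-/

open Real MeasureTheory Set Filter Topology

section SecondMomentExp

variable {b : ℝ}

lemma hasDerivAt_sq_mul_exp_neg_div (hb : b ≠ 0) (x : ℝ) :
    HasDerivAt (fun x => -b * exp (-x / b) * (x ^ 2 + 2 * b * x + 2 * b ^ 2))
      (x ^ 2 * exp (-x / b)) x := by
  have hexp : HasDerivAt (fun x => exp (-x / b)) (exp (-x / b) * (-1 / b)) x :=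
    ((hasDerivAt_id x).neg.div_const b).exp
  have hpoly : HasDerivAt (fun x => x ^ 2 + 2 * b * x + 2 * b ^ 2) (2 * x + 2 * b) x := by
    simpa using (((hasDerivAt_pow 2 x).add ((hasDerivAt_id x).const_mul (2 * b))).add_const
      (2 * b ^ 2))
  refine ((hexp.const_mul (-b)).mul hpoly).congr_deriv ?_
  field_simp
  ring

lemma tendsto_pow_mul_exp_neg_div_atTop_nhds_zero (hb : 0 < b) (n : ℕ) :
    Tendsto (fun x => x ^ n * exp (-x / b)) atTop (𝓝 0) := by
  refine (tendsto_rpow_mul_exp_neg_mul_atTop_nhds_zero n b⁻¹ (inv_pos.2 hb)).congr fun x => ?_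
  rw [rpow_natCast, neg_mul, inv_mul_eq_div, neg_div]

lemma tendsto_antideriv_sq_mul_exp_neg_div (hb : 0 < b) :
    Tendsto (fun x => -b * exp (-x / b) * (x ^ 2 + 2 * b * x + 2 * b ^ 2)) atTop (𝓝 0) := by
  have h := (((tendsto_pow_mul_exp_neg_div_atTop_nhds_zero hb 2).add
    ((tendsto_pow_mul_exp_neg_div_atTop_nhds_zero hb 1).const_mul (2 * b))).add
    ((tendsto_pow_mul_exp_neg_div_atTop_nhds_zero hb 0).const_mul (2 * b ^ 2))).const_mul (-b)
  simp only [mul_zero, add_zero] at h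
  exact h.congr fun x => by ring

lemma integrableOn_Ioi_sq_mul_exp_neg_div (hb : 0 < b) (c : ℝ) :
    IntegrableOn (fun x => x ^ 2 * exp (-x / b)) (Ioi c) :=
  integrableOn_Ioi_deriv_of_nonneg' (fun x _ => hasDerivAt_sq_mul_exp_neg_div hb.ne' x)
    (fun x _ => by positivity) (tendsto_antideriv_sq_mul_exp_neg_div hb)

lemma integral_Ioi_sq_mul_exp_neg_div (hb : 0 < b) (c : ℝ) :
    ∫ x in Ioi c, x ^ 2 * exp (-x / b) = b * exp (-c / b) * (c ^ 2 + 2 * b * c + 2 * b ^ 2) := by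
  rw [integral_Ioi_of_hasDerivAt_of_nonneg' (fun x _ => hasDerivAt_sq_mul_exp_neg_div hb.ne' x)
    (fun x _ => by positivity) (tendsto_antideriv_sq_mul_exp_neg_div hb)]
  ring

lemma integral_Ioc_zero_sq_mul_exp_neg_div (hb : b ≠ 0) {c : ℝ} (hc : 0 ≤ c) :
    ∫ x in Ioc 0 c, x ^ 2 * exp (-x / b)
      = b * (2 * b ^ 2 - exp (-c / b) * (c ^ 2 + 2 * b * c + 2 * b ^ 2)) := by
  rw [← intervalIntegral.integral_of_le hc,
    intervalIntegral.integral_eq_sub_of_hasDerivAt (fun x _ => hasDerivAt_sq_mul_exp_neg_div hb x)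
      ((by fun_prop : Continuous fun x => x ^ 2 * exp (-x / b)).intervalIntegrable 0 c)]
  simp only [neg_zero, zero_div, exp_zero, ne_eq, OfNat.ofNat_ne_zero, not_false_eq_true,
    zero_pow, mul_zero, add_zero, mul_one]
  ring

end SecondMomentExp

lemma setIntegral_Ioi_ite_le {f g : ℝ → ℝ} {a c : ℝ} (hac : a ≤ c)
    (hf : IntegrableOn f (Ioc a c)) (hg : IntegrableOn g (Ioi c)) :
    ∫ x in Ioi a, (if x ≤ c then f x else g x) = (∫ x in Ioc a c, f x) + ∫ x in Ioi c, g x := by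
  have hf' : ∫ x in Ioc a c, (if x ≤ c then f x else g x) = ∫ x in Ioc a c, f x :=
    setIntegral_congr_fun measurableSet_Ioc fun x hx => if_pos hx.2
  have hg' : ∫ x in Ioi c, (if x ≤ c then f x else g x) = ∫ x in Ioi c, g x :=
    setIntegral_congr_fun measurableSet_Ioi fun x hx => if_neg (not_le.2 hx)
  rw [← Ioc_union_Ioi_eq_Ioi hac, setIntegral_union (Ioc_disjoint_Ioi le_rfl) measurableSet_Ioi,
    hf', hg']
  · exact hf.congr_fun (fun x hx => (if_pos hx.2).symm) measurableSet_Ioc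
  · exact hg.congr_fun (fun x hx => (if_neg (not_le.2 hx)).symm) measurableSet_Ioi

theorem laplace_mixture_second_moment_general
    (b₁ b₂ ct a₁ a₂ : ℝ) (hb₁ : b₁ > 0) (hb₂ : b₂ > 0) (hct : ct > 0)
    (Lm : ℝ → ℝ)
    (hLm : ∀ x, Lm x = if |x| ≤ ct then (a₂ / (2 * b₂)) * exp (-|x| / b₂)
      else (a₁ / (2 * b₁)) * exp (-|x| / b₁)) :
    ∫ x : ℝ, x ^ 2 * Lm x
      = 2 * a₂ * (b₂ ^ 2 - exp (-ct / b₂) * (b₂ ^ 2 + b₂ * ct + ct ^ 2 / 2))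
        + 2 * a₁ * exp (-ct / b₁) * (b₁ ^ 2 + b₁ * ct + ct ^ 2 / 2) := by
  set g : ℝ → ℝ := fun t => if t ≤ ct then a₂ / (2 * b₂) * (t ^ 2 * exp (-t / b₂))
    else a₁ / (2 * b₁) * (t ^ 2 * exp (-t / b₁))
  have h_even : (fun x => x ^ 2 * Lm x) = fun x => g |x| := by
    ext x
    simp only [g, hLm, sq_abs]
    split_ifs <;> ring
  have h_inner : IntegrableOn (fun t => a₂ / (2 * b₂) * (t ^ 2 * exp (-t / b₂))) (Ioc 0 ct) :=
    (by fun_prop : Continuous fun t => a₂ / (2 * b₂) * (t ^ 2 * exp (-t / b₂))).integrableOn_Ioc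
  have h_outer := (integrableOn_Ioi_sq_mul_exp_neg_div hb₁ ct).const_mul (a₁ / (2 * b₁))
  rw [h_even, integral_comp_abs, setIntegral_Ioi_ite_le hct.le h_inner h_outer,
    integral_const_mul, integral_const_mul, integral_Ioc_zero_sq_mul_exp_neg_div hb₂.ne' hct.le,
    integral_Ioi_sq_mul_exp_neg_div hb₁]
  field_simp
  ring

theorem laplace_mixture_second_moment
    (b₁ b₂ ct a₁ a₂ : ℝ) (hb₁ : b₁ > 0) (hb₂ : b₂ > 0) (hct : ct > 0)
    (ha₁ : a₁ > 0) (ha₂ : a₂ > 0)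
    (Lm : ℝ → ℝ)
    (hLm : ∀ x, Lm x = if |x| ≤ ct then (a₂ / (2 * b₂)) * exp (-|x| / b₂)
      else (a₁ / (2 * b₁)) * exp (-|x| / b₁)) :
    ∫ x : ℝ, x ^ 2 * Lm x
      = 2 * a₂ * (b₂ ^ 2 - exp (-ct / b₂) * (b₂ ^ 2 + b₂ * ct + ct ^ 2 / 2))
        + 2 * a₁ * exp (-ct / b₁) * (b₁ ^ 2 + b₁ * ct + ct ^ 2 / 2) :=
  laplace_mixture_second_moment_general b₁ b₂ ct a₁ a₂ hb₁ hb₂ hct Lm hLm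
end

section
/- A symmetric geometric random variable can be realized as the difference of floors of two i.i.d. exponentials: if E₁, E₂ are i.i.d. Exponential(λ) with λ > 0, then ⌊E₁⌋ - ⌊E₂⌋ has the symmetric geometric distribution with parameter α = exp(λ), i.e., P(⌊E₁⌋ - ⌊E₂⌋ = k) = ((α-1)/(α+1)) α^{-|k|} for every k ∈ ℤ. -/
/-!
With q = e^{-λ}, the exponential CDF gives P(⌊E⌋ = n) = e^{-λn} - e^{-λ(n+1)} = (1 - q) qⁿ for
n ∈ ℕ and 0 for n < 0. By independence, for k ≥ 0,
P(⌊E₁⌋ - ⌊E₂⌋ = k) = ∑ₙ P(⌊E₁⌋ = k + n) P(⌊E₂⌋ = n) = (1 - q)² qᵏ ∑ₙ q²ⁿ = (1 - q)/(1 + q) · qᵏ,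
which is ((α - 1)/(α + 1)) α^{-k}; exchanging E₁ and E₂ gives k < 0.
-/

open Real MeasureTheory ProbabilityTheory Set

namespace ProbabilityTheory

theorem IndepFun.measure_sub_eq_tsum {Ω G : Type*} [MeasurableSpace Ω] [AddGroup G] [Countable G]
    [MeasurableSpace G] [MeasurableSingletonClass G] {μ : Measure Ω} {X Y : Ω → G}
    (hX : Measurable X) (hY : Measurable Y) (hXY : IndepFun X Y μ) (k : G) :
    μ {ω | X ω - Y ω = k} = ∑' n, μ (X ⁻¹' {k + n}) * μ (Y ⁻¹' {n}) := by
  have hfibres : {ω | X ω - Y ω = k} = ⋃ n, X ⁻¹' {k + n} ∩ Y ⁻¹' {n} := by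
    ext ω
    simp [sub_eq_iff_eq_add]
  have hdisj : Pairwise (Function.onFun Disjoint fun n ↦ X ⁻¹' {k + n} ∩ Y ⁻¹' {n}) :=
    fun _ _ hmn ↦
      ((disjoint_singleton.2 hmn).preimage Y).mono inter_subset_right inter_subset_right
  rw [hfibres, measure_iUnion hdisj fun n ↦ (hX (measurableSet_singleton _)).inter
    (hY (measurableSet_singleton _))]
  exact tsum_congr fun n ↦ hXY.measure_inter_preimage_eq_mul _ _ (measurableSet_singleton _)
    (measurableSet_singleton _)

end ProbabilityTheory

lemma expMeasure_floor_eq_natCast {lam : ℝ} (hlam : 0 < lam) (n : ℕ) :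
    expMeasure lam {x | ⌊x⌋ = n} = ENNReal.ofReal ((1 - exp (-lam)) * exp (-lam) ^ n) := by
  have := isProbabilityMeasure_expMeasure hlam
  have hIco : {x : ℝ | ⌊x⌋ = n} = Ico (n : ℝ) (n + 1) := by
    ext x
    simp [Int.floor_eq_iff]
  have hac : expMeasure lam ≪ volume := withDensity_absolutelyContinuous _ _
  rw [hIco, measure_congr (hac.ae_eq Ico_ae_eq_Ioc), ← measure_cdf (expMeasure lam),
    StieltjesFunction.measure_Ioc, cdf_expMeasure_eq hlam, cdf_expMeasure_eq hlam,
    if_pos (by positivity), if_pos (by positivity), ← exp_nat_mul]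
  congr 1
  rw [show -(lam * (n + 1)) = n * -lam + -lam by ring, show -(lam * n) = n * -lam by ring, exp_add]
  ring

lemma expMeasure_floor_eq_of_neg (lam : ℝ) {n : ℤ} (hn : n < 0) :
    expMeasure lam {x | ⌊x⌋ = n} = 0 := by
  have hIio : expMeasure lam (Iio 0) = 0 := by
    rw [expMeasure, gammaMeasure, withDensity_apply _ measurableSet_Iio]
    exact lintegral_gammaPDF_of_nonpos le_rfl
  refine measure_mono_null (fun x (hx : ⌊x⌋ = n) ↦ ?_) hIio
  exact Int.floor_lt_zero.1 (hx ▸ hn)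

lemma tsum_ofReal_geometric_mul_geometric {q : ℝ} (hq₀ : 0 ≤ q) (hq₁ : q < 1) (k : ℕ) :
    ∑' n : ℕ, ENNReal.ofReal ((1 - q) * q ^ (n + k)) * ENNReal.ofReal ((1 - q) * q ^ n)
      = ENNReal.ofReal ((1 - q) / (1 + q) * q ^ k) := by
  have hq2 : q ^ 2 < 1 := by nlinarith
  have hterm : ∀ n : ℕ, ENNReal.ofReal ((1 - q) * q ^ (n + k)) * ENNReal.ofReal ((1 - q) * q ^ n)
      = ENNReal.ofReal ((1 - q) ^ 2 * q ^ k * (q ^ 2) ^ n) := fun n ↦ by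
    rw [← ENNReal.ofReal_mul (by have := pow_nonneg hq₀ (n + k); nlinarith)]
    ring_nf
  simp_rw [hterm]
  rw [← ENNReal.ofReal_tsum_of_nonneg (fun n ↦ by positivity)
    ((summable_geometric_of_lt_one (by positivity) hq2).mul_left _),
    tsum_mul_left, tsum_geometric_of_lt_one (by positivity) hq2]
  congr 1
  rw [show 1 - q ^ 2 = (1 - q) * (1 + q) by ring]
  have : 1 - q ≠ 0 := by linarith
  field_simp

section

variable {Ω : Type*} [MeasurableSpace Ω] {μ : Measure Ω} {lam : ℝ}

lemma measure_floor_eq_of_map_eq_expMeasure {E : Ω → ℝ} (hE : Measurable E)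
    (hd : μ.map E = expMeasure lam) (n : ℤ) :
    μ ((fun ω ↦ ⌊E ω⌋) ⁻¹' {n}) = expMeasure lam {x | ⌊x⌋ = n} := by
  rw [← hd]
  exact (Measure.map_apply hE (Int.measurable_floor (measurableSet_singleton n))).symm

lemma measure_floor_sub_floor_eq_natCast (hlam : 0 < lam) {E₁ E₂ : Ω → ℝ}
    (hE₁ : Measurable E₁) (hE₂ : Measurable E₂) (hind : IndepFun E₁ E₂ μ)
    (hd₁ : μ.map E₁ = expMeasure lam) (hd₂ : μ.map E₂ = expMeasure lam) (k : ℕ) :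
    μ {ω | ⌊E₁ ω⌋ - ⌊E₂ ω⌋ = k}
      = ENNReal.ofReal ((1 - exp (-lam)) / (1 + exp (-lam)) * exp (-lam) ^ k) := by
  have hfloor₂_neg (n : ℕ) : μ ((fun ω ↦ ⌊E₂ ω⌋) ⁻¹' {-(n + 1 : ℤ)}) = 0 := by
    rw [measure_floor_eq_of_map_eq_expMeasure hE₂ hd₂, expMeasure_floor_eq_of_neg lam (by omega)]
  calc μ {ω | ⌊E₁ ω⌋ - ⌊E₂ ω⌋ = k}
      = ∑' n : ℤ, μ ((fun ω ↦ ⌊E₁ ω⌋) ⁻¹' {(k : ℤ) + n}) * μ ((fun ω ↦ ⌊E₂ ω⌋) ⁻¹' {n}) :=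
        (hind.comp Int.measurable_floor Int.measurable_floor).measure_sub_eq_tsum
          (Int.measurable_floor.comp hE₁) (Int.measurable_floor.comp hE₂) k
    _ = ∑' n : ℕ, ENNReal.ofReal ((1 - exp (-lam)) * exp (-lam) ^ (n + k))
          * ENNReal.ofReal ((1 - exp (-lam)) * exp (-lam) ^ n) := by
        rw [tsum_of_nat_of_neg_add_one ENNReal.summable ENNReal.summable]
        simp only [hfloor₂_neg, mul_zero, tsum_zero, add_zero]
        refine tsum_congr fun n ↦ ?_
        rw [measure_floor_eq_of_map_eq_expMeasure hE₁ hd₁,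
          measure_floor_eq_of_map_eq_expMeasure hE₂ hd₂, ← Nat.cast_add,
          expMeasure_floor_eq_natCast hlam, expMeasure_floor_eq_natCast hlam, add_comm k]
    _ = _ := tsum_ofReal_geometric_mul_geometric (exp_pos _).le
        (exp_lt_one_iff.2 (neg_neg_of_pos hlam)) k

end

theorem floor_exponential_difference_symmetric_geometric_general
    {Ω : Type*} [MeasurableSpace Ω] (μ : Measure Ω)
    (lam : ℝ) (hlam : 0 < lam)
    (E₁ E₂ : Ω → ℝ) (hE₁ : Measurable E₁) (hE₂ : Measurable E₂)
    (hind : IndepFun E₁ E₂ μ)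
    (hd₁ : Measure.map E₁ μ = expMeasure lam)
    (hd₂ : Measure.map E₂ μ = expMeasure lam)
    (α : ℝ) (hα : α = exp lam) (k : ℤ) :
    μ {ω | ⌊E₁ ω⌋ - ⌊E₂ ω⌋ = k}
      = ENNReal.ofReal (((α - 1) / (α + 1)) * α ^ (-|k|)) := by
  have hα₀ : 0 < α := hα ▸ exp_pos lam
  have hmass (m : ℕ) : (1 - exp (-lam)) / (1 + exp (-lam)) * exp (-lam) ^ m
      = (α - 1) / (α + 1) * α ^ (-(m : ℤ)) := by
    rw [exp_neg, ← hα, zpow_neg, zpow_natCast, inv_pow]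
    field_simp
  obtain ⟨m, rfl | rfl⟩ := k.eq_nat_or_neg
  · rw [measure_floor_sub_floor_eq_natCast hlam hE₁ hE₂ hind hd₁ hd₂, hmass, Nat.abs_cast]
  · have hswap : {ω | ⌊E₁ ω⌋ - ⌊E₂ ω⌋ = -(m : ℤ)} = {ω | ⌊E₂ ω⌋ - ⌊E₁ ω⌋ = m} := by
      ext ω
      simp only [mem_ofPred_eq]
      omega
    rw [hswap, measure_floor_sub_floor_eq_natCast hlam hE₂ hE₁ hind.symm hd₂ hd₁, hmass, abs_neg,
      Nat.abs_cast]

theorem floor_exponential_difference_symmetric_geometric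
    {Ω : Type*} [MeasurableSpace Ω] (μ : Measure Ω) [IsProbabilityMeasure μ]
    (lam : ℝ) (hlam : 0 < lam)
    (E₁ E₂ : Ω → ℝ) (hE₁ : Measurable E₁) (hE₂ : Measurable E₂)
    (hind : IndepFun E₁ E₂ μ)
    (hd₁ : Measure.map E₁ μ = expMeasure lam)
    (hd₂ : Measure.map E₂ μ = expMeasure lam)
    (α : ℝ) (hα : α = exp lam) (k : ℤ) :
    μ {ω | ⌊E₁ ω⌋ - ⌊E₂ ω⌋ = k}
      = ENNReal.ofReal (((α - 1) / (α + 1)) * α ^ (-|k|)) :=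
  floor_exponential_difference_symmetric_geometric_general μ lam hlam E₁ E₂ hE₁ hE₂ hind hd₁ hd₂ α
    hα k
end
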